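/- arXiv:math/0509359 — 2 statements merged into one kernel-verified Lean document; each statement's English description precedes it below -/
import Mathlib

section
/- Let ω(k) = 2|sin(k/2)| (the dispersion relation of the Fermi–Pasta–Ulam lattice). Fix k* with 0 < k* ≤ π, let z be of the form z = ζ' + ζ'' + ζ''' with each ζ^(j) = ±1, and ζ = ±1. Then the equation z·ω(k*) − ζ·ω(z·k*) = 0 holds only when z = ζ. -/
open Real

lemma triple_abs_lt {s : ℝ} (h0 : 0 < s) (h1 : s ≤ 1) : |3*s - 4*s^3| < 3*s := by
  have hs2 : s^2 ≤ 1 := by nlinarith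
  rw [abs_lt]
  constructor
  · nlinarith [mul_pos h0 h0, mul_pos (mul_pos h0 h0) h0]
  · nlinarith [pow_pos h0 3]

/-- For the Fermi–Pasta–Ulam dispersion relation ω(k) = 2|sin(k/2)|, a center
0 < k* ≤ π, z a sum of three signs ±1 (so z ∈ {−3,−1,1,3}) and ζ = ±1, the
equation z·ω(k*) − ζ·ω(z·k*) = 0 holds only when z = ζ. -/
theorem fpu_dispersion_nondegeneracy (k : ℝ) (hk0 : 0 < k) (hkπ : k ≤ π)
    (z ζ : ℝ)
    (hz : ∃ a b c : ℝ, (a = 1 ∨ a = -1) ∧ (b = 1 ∨ b = -1) ∧ (c = 1 ∨ c = -1) ∧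
      z = a + b + c)
    (hζ : ζ = 1 ∨ ζ = -1)
    (heq : z * (2 * |Real.sin (k / 2)|) - ζ * (2 * |Real.sin (z * k / 2)|) = 0) :
    z = ζ := by
  obtain ⟨a, b, c, ha, hb, hc, hzv⟩ := hz
  have hs0 : 0 < Real.sin (k / 2) := by
    apply Real.sin_pos_of_pos_of_lt_pi (by linarith)
    nlinarith [Real.pi_pos]
  have hs1 : Real.sin (k / 2) ≤ 1 := Real.sin_le_one _
  set s := Real.sin (k / 2) with hsdef
  have habs : |s| = s := abs_of_pos hs0
  have hzcases : z = 3 ∨ z = 1 ∨ z = -1 ∨ z = -3 := by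
    rcases ha with rfl | rfl <;> rcases hb with rfl | rfl <;> rcases hc with rfl | rfl <;>
      simp [hzv] <;> norm_num
  have h3 : Real.sin (3 * (k/2)) = 3 * s - 4 * s ^ 3 := Real.sin_three_mul _
  have htri : |3*s - 4*s^3| < 3*s := triple_abs_lt hs0 hs1
  rcases hzcases with rfl | rfl | rfl | rfl
  · -- z = 3 : contradiction
    exfalso
    have h32 : (3:ℝ) * k / 2 = 3 * (k/2) := by ring
    rw [h32, h3, habs] at heq
    rcases hζ with rfl | rfl
    · cases abs_cases (3*s - 4*s^3) with
      | inl h => nlinarith [h.1]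
      | inr h => nlinarith [h.1]
    · have : |3 * s - 4 * s ^ 3| ≥ 0 := abs_nonneg _
      nlinarith
  · -- z = 1
    have h1k : (1:ℝ) * k / 2 = k / 2 := by ring
    rw [h1k, habs] at heq
    rcases hζ with rfl | rfl
    · rfl
    · exfalso; nlinarith
  · -- z = -1
    have hm : Real.sin (-1 * k / 2) = - s := by
      rw [show (-1 : ℝ) * k / 2 = -(k/2) by ring, Real.sin_neg]
    rw [hm, abs_neg, habs] at heq
    rcases hζ with rfl | rfl
    · exfalso; nlinarith
    · rfl
  · -- z = -3 : contradiction
    exfalso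
    have h32 : (-3:ℝ) * k / 2 = -(3 * (k/2)) := by ring
    rw [h32, Real.sin_neg, abs_neg, h3, habs] at heq
    rcases hζ with rfl | rfl
    · have : |3 * s - 4 * s ^ 3| ≥ 0 := abs_nonneg _
      nlinarith
    · cases abs_cases (3*s - 4*s^3) with
      | inl h => nlinarith [h.1]
      | inr h => nlinarith [h.1]
end

section
/- The coefficients of the power series solution u = Ǧ(x) = Σ_{m≥1} Ǧ^{(m)} x^m of the scalar equation u = Č·(u²/R²)/(1 − u/R) + x satisfy Ǧ^{(m)} ≤ (R²/(2(Č+R)))·(4(Č+R)/R²)^m for all m ≥ 1. -/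
/-! The closed form `u` solves the quadratic `u = (c/R) u² + x`, so comparing coefficients through
the Cauchy product shows that its Taylor coefficients satisfy the Catalan recurrence, whence
`Ǧ^{(k+1)} = (c/R)^k Cat_k` with `c/R = (Č + R)/R²`. Since `Cat_k ≤ 4^k` and
`R²/(2(Č+R)) · 4(Č+R)/R² = 2`, the claimed bound holds with a factor `2` to spare. -/

open Finset Filter Topology

theorem catalan_le_four_pow (n : ℕ) : catalan n ≤ 4 ^ n := by
  rw [catalan_eq_centralBinom_div]
  exact (Nat.div_le_self _ _).trans (Nat.centralBinom_le_four_pow n)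

theorem pow_mul_catalan_le {q : ℝ} (hq : 0 ≤ q) (n : ℕ) : q ^ n * catalan n ≤ (4 * q) ^ n := by
  rw [mul_pow, mul_comm (4 ^ n)]
  gcongr
  exact_mod_cast catalan_le_four_pow n

theorem eq_zero_of_eventually_hasSum_mul_pow {𝕜 : Type*} [NontriviallyNormedField 𝕜]
    {a : ℕ → 𝕜} (h : ∀ᶠ x in 𝓝 0, HasSum (fun n => a n * x ^ n) 0) : a = 0 := by
  obtain ⟨δ, hδ, hball⟩ := Metric.eventually_nhds_iff.1 h
  obtain ⟨x, hx0, hxδ⟩ := NormedField.exists_norm_lt 𝕜 hδ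
  set p := FormalMultilinearSeries.ofScalars 𝕜 a
  have hp : ∀ y, (fun n => p n fun _ => y) = fun n => a n * y ^ n := fun y =>
    funext fun n => by simp [p, mul_comm]
  have hradius : (‖x‖₊ : ENNReal) ≤ p.radius := by
    refine p.le_radius_of_tendsto (l := 0) ?_
    have := (hball (by simpa using hxδ)).summable.tendsto_atTop_zero.norm
    simpa [p, FormalMultilinearSeries.ofScalars_norm, norm_mul, norm_pow] using this
  have hps : HasFPowerSeriesOnBall (fun _ => (0 : 𝕜)) p 0 ‖x‖₊ :=
    { r_le := hradius
      r_pos := by simpa using hx0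
      hasSum := fun {y} hy => by
        have hyx : ‖y‖ < ‖x‖ := by simpa using hy
        rw [hp]
        exact hball (by simpa using hyx.trans hxδ) }
  exact (FormalMultilinearSeries.ofScalars_series_eq_zero 𝕜).1 hps.hasFPowerSeriesAt.eq_zero

theorem HasSum.mul_antidiagonal_pow {R : Type*} [NormedCommRing R] {a b : ℕ → R} {x s t : R}
    (ha : HasSum (fun n => a n * x ^ n) s) (hb : HasSum (fun n => b n * x ^ n) t)
    (ha' : Summable fun n => ‖a n * x ^ n‖) (hb' : Summable fun n => ‖b n * x ^ n‖) :
    HasSum (fun n => (∑ p ∈ antidiagonal n, a p.1 * b p.2) * x ^ n) (s * t) := by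
  have hterm : ∀ n, (∑ p ∈ antidiagonal n, a p.1 * b p.2) * x ^ n =
      ∑ p ∈ antidiagonal n, a p.1 * x ^ p.1 * (b p.2 * x ^ p.2) := fun n => by
    rw [sum_mul]
    refine sum_congr rfl fun p hp => ?_
    rw [← mem_antidiagonal.1 hp, pow_add]
    ring
  simp_rw [hterm]
  rw [← ha.tsum_eq, ← hb.tsum_eq,
    tsum_mul_tsum_eq_tsum_sum_antidiagonal_of_summable_norm' ha' ha.summable hb' hb.summable]
  exact (summable_sum_mul_antidiagonal_of_summable_norm' ha' ha.summable hb' hb.summable).hasSum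

theorem eq_pow_mul_catalan_of_recurrence {S : Type*} [CommSemiring S] {a : ℕ → S} {q : S}
    (h0 : a 0 = 0)
    (h : ∀ n, a n = q * ∑ p ∈ antidiagonal n, a p.1 * a p.2 + if n = 1 then 1 else 0) (n : ℕ) :
    a (n + 1) = q ^ n * catalan n := by
  induction n using Nat.strong_induction_on with
  | _ n ih =>
    rcases n with _ | k
    · simpa [h0, Nat.sum_antidiagonal_succ] using h 1
    · have hsplit : ∑ p ∈ antidiagonal (k + 2), a p.1 * a p.2 =
          ∑ p ∈ antidiagonal k, a (p.1 + 1) * a (p.2 + 1) := by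
        rw [Nat.sum_antidiagonal_succ, Nat.sum_antidiagonal_succ']
        simp [h0]
      have hterm : ∀ p ∈ antidiagonal k, a (p.1 + 1) * a (p.2 + 1) =
          q ^ k * (catalan p.1 * catalan p.2 : ℕ) := fun p hp => by
        have hk := mem_antidiagonal.1 hp
        rw [ih p.1 (by omega), ih p.2 (by omega), ← hk, pow_add]
        push_cast
        ring
      rw [h (k + 2), hsplit, sum_congr rfl hterm, ← mul_sum, ← Nat.cast_sum, ← catalan_succ',
        if_neg (by omega), add_zero, pow_succ', mul_assoc]

theorem quadratic_recurrence_of_hasSum {𝕜 : Type*} [NontriviallyNormedField 𝕜] {a : ℕ → 𝕜}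
    {f : 𝕜 → 𝕜} {q : 𝕜} (ha : ∀ᶠ x in 𝓝 0, HasSum (fun n => a n * x ^ n) (f x))
    (ha' : ∀ᶠ x in 𝓝 0, Summable fun n => ‖a n * x ^ n‖)
    (hf : ∀ᶠ x in 𝓝 0, f x = q * f x ^ 2 + x) (n : ℕ) :
    a n = q * ∑ p ∈ antidiagonal n, a p.1 * a p.2 + if n = 1 then 1 else 0 := by
  suffices h : (fun n => a n - (q * ∑ p ∈ antidiagonal n, a p.1 * a p.2 +
      if n = 1 then 1 else 0)) = 0 from sub_eq_zero.1 (congrFun h n)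
  refine eq_zero_of_eventually_hasSum_mul_pow ?_
  filter_upwards [ha, ha', hf] with x hax hax' hfx
  have hX : HasSum (fun n => (if n = 1 then 1 else 0 : 𝕜) * x ^ n) x := by
    convert hasSum_ite_eq 1 x using 2 with n
    split_ifs with hn <;> simp [hn]
  have hval : f x - (q * (f x * f x) + x) = 0 := by
    rw [sq] at hfx
    exact sub_eq_zero.2 hfx
  have h := hax.sub (((hax.mul_antidiagonal_pow hax hax' hax').mul_left q).add hX)
  rw [hval] at h
  exact h.congr_fun fun n => by ring

theorem one_sub_sqrt_solves_quadratic {c R x : ℝ} (hc : c ≠ 0) (hR : R ≠ 0)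
    (hx : 4 * c * x / R ≤ 1) :
    R / (2 * c) * (1 - √(1 - 4 * c * x / R)) =
      c / R * (R / (2 * c) * (1 - √(1 - 4 * c * x / R))) ^ 2 + x := by
  have hs := Real.sq_sqrt (sub_nonneg.2 hx)
  generalize √(1 - 4 * c * x / R) = s at hs ⊢
  field_simp at hs ⊢
  linear_combination (-1) * hs

theorem majorant_coefficient_bound_general (C R : ℝ) (hC : 0 < C) (hR : 0 < R)
    (G : ℕ → ℝ) (hGnonneg : ∀ m, 0 ≤ G m)
    (ε : ℝ) (hε : 0 < ε)
    (hsum : ∀ x : ℝ, |x| < ε →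
      HasSum (fun m => G m * x ^ m)
        (R / (2 * (C / R + 1)) * (1 - Real.sqrt (1 - 4 * (C / R + 1) * x / R)))) :
    ∀ m : ℕ, 1 ≤ m →
      G m ≤ R ^ 2 / (2 * (C + R)) * (4 * (C + R) / R ^ 2) ^ m := by
  set c := C / R + 1 with hc
  have hc0 : 0 < c := by positivity
  have hG0 : G 0 = 0 := by
    simpa using ((hsum 0 (by simpa using hε)).unique
      (hasSum_single 0 fun n hn => by simp [hn])).symm
  have hnear : ∀ᶠ x in 𝓝 (0 : ℝ), |x| < ε ∧ 4 * c * x / R ≤ 1 :=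
    ((continuous_abs.tendsto' 0 0 abs_zero).eventually_lt_const hε).and
      (((by fun_prop : Continuous fun x : ℝ => 4 * c * x / R).tendsto' 0 0 (by simp)
        ).eventually_le_const zero_lt_one)
  have hrec := quadratic_recurrence_of_hasSum (a := G) (q := c / R)
    (hnear.mono fun x hx => hsum x hx.1)
    (hnear.mono fun x hx => by
      simpa [abs_mul, abs_of_nonneg (hGnonneg _)] using (hsum |x| (by simpa using hx.1)).summable)
    (hnear.mono fun x hx => one_sub_sqrt_solves_quadratic hc0.ne' hR.ne' hx.2)
  rintro m hm
  obtain ⟨k, rfl⟩ := Nat.exists_eq_add_of_le' hm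
  have hq : 4 * (c / R) = 4 * (C + R) / R ^ 2 := by
    rw [hc]
    field_simp
  calc G (k + 1) = (c / R) ^ k * catalan k := eq_pow_mul_catalan_of_recurrence hG0 hrec k
    _ ≤ (4 * (c / R)) ^ k := pow_mul_catalan_le (by positivity) k
    _ ≤ 2 * (4 * (c / R)) ^ k := by linarith [pow_nonneg (by positivity : 0 ≤ 4 * (c / R)) k]
    _ = R ^ 2 / (2 * (C + R)) * (4 * (C + R) / R ^ 2) ^ (k + 1) := by
      rw [hq, pow_succ' (4 * (C + R) / R ^ 2) k, ← mul_assoc]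
      congr 1
      field_simp
      ring

/-- The coefficients Ǧ^{(m)} of the power series solution
u = Ǧ(x) = Σ_{m≥1} Ǧ^{(m)} x^m of the scalar equation
u = Č·(u²/R²)/(1 − u/R) + x, i.e. the nonnegative Taylor coefficients at 0 of
the explicit solution u(x) = (R/(2c))(1 − √(1 − 4cx/R)) with c = Č/R + 1,
satisfy Ǧ^{(m)} ≤ (R²/(2(Č+R)))·(4(Č+R)/R²)^m for all m ≥ 1. -/
theorem majorant_coefficient_bound (C R : ℝ) (hC : 0 < C) (hR : 0 < R)
    (G : ℕ → ℝ) (hGnonneg : ∀ m, 0 ≤ G m) (hG0 : G 0 = 0)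
    (ε : ℝ) (hε : 0 < ε)
    (hsum : ∀ x : ℝ, |x| < ε →
      HasSum (fun m => G m * x ^ m)
        (R / (2 * (C / R + 1)) * (1 - Real.sqrt (1 - 4 * (C / R + 1) * x / R)))) :
    ∀ m : ℕ, 1 ≤ m →
      G m ≤ R ^ 2 / (2 * (C + R)) * (4 * (C + R) / R ^ 2) ^ m :=
  majorant_coefficient_bound_general C R hC hR G hGnonneg ε hε hsum
end
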